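/- Let F : ℝⁿ → ℝⁿ be continuously differentiable and let M : ℝⁿ → ℝ^{n×n} be a continuously differentiable symmetric-matrix-valued map with p̲ I ⪯ M(x) ⪯ p̄ I for all x (p̄ ≥ p̲ > 0), and suppose there is λ₀ > 0 such that for all x and v ∈ ℝⁿ: vᵀ(∂_F M(x) + DF(x)ᵀ M(x) + M(x) DF(x)) v ≤ −λ₀ vᵀ M(x) v. Let x : [0,∞) → ℝⁿ be differentiable with x′(t) = F(x(t)) and let δ : [0,∞) → ℝⁿ be differentiable with δ′(t) = DF(x(t)) δ(t) for all t ≥ 0. Then δ(t)ᵀ M(x(t)) δ(t) ≤ e^{−λ₀ t} · δ(0)ᵀ M(x(0)) δ(0) for all t ≥ 0, and consequently ‖δ(t)‖ ≤ √(p̄/p̲) · e^{−λ₀ t / 2} · ‖δ(0)‖. -/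

import Mathlib

/-!
Along the variational dynamics δ' = DF(x) δ, the derivative of the quadratic form
V(t) = δᵀ M(x) δ is δᵀ (∂_F M + DFᵀ M + M DF) δ, which the contraction condition bounds by
-λ₀ V. Grönwall's inequality gives V(t) ≤ e^{-λ₀ t} V(0), and the uniform bounds
p₁ I ⪯ M ⪯ p₂ I turn this into the decay of the Euclidean norm of δ.
-/

open Matrix

attribute [local instance] Matrix.normedAddCommGroup Matrix.normedSpace

/-- Jacobian matrix of a map between finite-dimensional coordinate spaces. -/
noncomputable def jacM {ι κ : Type*} [Fintype ι] [DecidableEq ι] [Fintype κ]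
    (f : (ι → ℝ) → (κ → ℝ)) (x : ι → ℝ) : Matrix κ ι ℝ :=
  Matrix.of fun k j => fderiv ℝ f x (Pi.single j 1) k

section Derivatives

variable {ι κ : Type*} [Fintype ι] {t : ℝ}

theorem HasDerivAt.dotProduct {u v : ℝ → ι → ℝ} {u' v' : ι → ℝ}
    (hu : HasDerivAt u u' t) (hv : HasDerivAt v v' t) :
    HasDerivAt (fun s => u s ⬝ᵥ v s) (u' ⬝ᵥ v t + u t ⬝ᵥ v') t := by
  simp only [_root_.dotProduct, ← Finset.sum_add_distrib]
  exact HasDerivAt.fun_sum fun i _ => (hasDerivAt_pi.1 hu i).mul (hasDerivAt_pi.1 hv i)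

theorem HasDerivAt.mulVec {A : ℝ → Matrix κ ι ℝ} {A' : Matrix κ ι ℝ} {u : ℝ → ι → ℝ}
    {u' : ι → ℝ} (hA : HasDerivAt A A' t) (hu : HasDerivAt u u' t) :
    HasDerivAt (fun s => A s *ᵥ u s) (A' *ᵥ u t + A t *ᵥ u') t :=
  hasDerivAt_pi.2 fun k => (hasDerivAt_pi.1 hA k).dotProduct hu

theorem HasDerivAt.dotProduct_mulVec_of_hasDerivAt_mulVec {A : ℝ → Matrix ι ι ℝ}
    {A' J : Matrix ι ι ℝ} {u : ℝ → ι → ℝ} (hA : HasDerivAt A A' t)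
    (hu : HasDerivAt u (J *ᵥ u t) t) :
    HasDerivAt (fun s => u s ⬝ᵥ (A s *ᵥ u s))
      (u t ⬝ᵥ ((A' + Jᵀ * A t + A t * J) *ᵥ u t)) t := by
  convert hu.dotProduct (hA.mulVec hu) using 1
  rw [add_mulVec, add_mulVec, ← mulVec_mulVec, ← mulVec_mulVec, dotProduct_add, dotProduct_add,
    dotProduct_add, dotProduct_mulVec _ Jᵀ, vecMul_transpose]
  ring

end Derivatives

theorem le_mul_exp_of_hasDerivAt_le_mul {f f' : ℝ → ℝ} {K : ℝ}
    (hf : ∀ t, 0 ≤ t → HasDerivAt f (f' t) t) (hle : ∀ t, 0 ≤ t → f' t ≤ K * f t)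
    {t : ℝ} (ht : 0 ≤ t) : f t ≤ f 0 * Real.exp (K * t) := by
  have := le_gronwallBound_of_liminf_deriv_right_le (ε := 0)
    (fun s hs => (hf s hs.1).continuousAt.continuousWithinAt)
    (fun s hs _ hr => (hf s hs.1).hasDerivWithinAt.liminf_right_slope_le hr) le_rfl
    (fun s hs => by simpa using hle s hs.1) t ⟨ht, le_rfl⟩
  rwa [gronwallBound_ε0, sub_zero] at this

theorem Real.sqrt_le_sqrt_div_mul_mul_sqrt {a b c p₁ p₂ : ℝ} (hp₁ : 0 < p₁) (hb : 0 ≤ b)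
    (hc : 0 ≤ c) (h : p₁ * a ≤ c ^ 2 * (p₂ * b)) : √a ≤ √(p₂ / p₁) * c * √b := by
  have ha : a ≤ p₂ / p₁ * c ^ 2 * b := by
    rw [← mul_le_mul_iff_of_pos_left hp₁]
    calc p₁ * a ≤ c ^ 2 * (p₂ * b) := h
      _ = p₁ * (p₂ / p₁ * c ^ 2 * b) := by field_simp
  calc √a ≤ √(p₂ / p₁ * c ^ 2 * b) := Real.sqrt_le_sqrt ha
    _ = √(p₂ / p₁) * c * √b := by
      rw [Real.sqrt_mul' _ hb, Real.sqrt_mul' _ (sq_nonneg c), Real.sqrt_sq hc]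

theorem stmt11_general {n : ℕ}
    (F : (Fin n → ℝ) → (Fin n → ℝ))
    (M : (Fin n → ℝ) → Matrix (Fin n) (Fin n) ℝ) (hM : ContDiff ℝ 1 M)
    (p₁ p₂ : ℝ) (hp₁ : 0 < p₁)
    (hbound : ∀ (x v : Fin n → ℝ), p₁ * (v ⬝ᵥ v) ≤ v ⬝ᵥ (M x *ᵥ v) ∧
        v ⬝ᵥ (M x *ᵥ v) ≤ p₂ * (v ⬝ᵥ v))
    (lam₀ : ℝ)
    (hcontr : ∀ (x v : Fin n → ℝ),
      v ⬝ᵥ ((fderiv ℝ M x (F x) + (jacM F x)ᵀ * M x + M x * jacM F x) *ᵥ v)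
        ≤ -lam₀ * (v ⬝ᵥ (M x *ᵥ v)))
    (x δ : ℝ → (Fin n → ℝ))
    (hx : ∀ t, 0 ≤ t → HasDerivAt x (F (x t)) t)
    (hδ : ∀ t, 0 ≤ t → HasDerivAt δ (jacM F (x t) *ᵥ δ t) t) :
    ∀ t, 0 ≤ t →
      δ t ⬝ᵥ (M (x t) *ᵥ δ t) ≤ Real.exp (-lam₀ * t) * (δ 0 ⬝ᵥ (M (x 0) *ᵥ δ 0)) ∧
      Real.sqrt (δ t ⬝ᵥ δ t)
        ≤ Real.sqrt (p₂ / p₁) * Real.exp (-(lam₀ * t) / 2) * Real.sqrt (δ 0 ⬝ᵥ δ 0) := by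
  intro t ht
  have hMx : ∀ s, 0 ≤ s → HasDerivAt (fun s => M (x s)) (fderiv ℝ M (x s) (F (x s))) s :=
    fun s hs => (hM.differentiable one_ne_zero (x s)).hasFDerivAt.comp_hasDerivAt s (hx s hs)
  have hdecay : δ t ⬝ᵥ (M (x t) *ᵥ δ t) ≤ Real.exp (-lam₀ * t) * (δ 0 ⬝ᵥ (M (x 0) *ᵥ δ 0)) :=
    (le_mul_exp_of_hasDerivAt_le_mul
      (fun s hs => (hMx s hs).dotProduct_mulVec_of_hasDerivAt_mulVec (hδ s hs))
      (fun s _ => hcontr (x s) (δ s)) ht).trans_eq (mul_comm _ _)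
  refine ⟨hdecay, Real.sqrt_le_sqrt_div_mul_mul_sqrt hp₁
    (Finset.sum_nonneg fun i _ => mul_self_nonneg (δ 0 i)) (Real.exp_nonneg _) ?_⟩
  have hsq : Real.exp (-(lam₀ * t) / 2) ^ 2 = Real.exp (-lam₀ * t) := by
    rw [← Real.exp_nat_mul]; ring_nf
  calc p₁ * (δ t ⬝ᵥ δ t) ≤ δ t ⬝ᵥ (M (x t) *ᵥ δ t) := (hbound (x t) (δ t)).1
    _ ≤ Real.exp (-lam₀ * t) * (δ 0 ⬝ᵥ (M (x 0) *ᵥ δ 0)) := hdecay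
    _ ≤ _ := by
      rw [hsq]
      exact mul_le_mul_of_nonneg_left (hbound (x 0) (δ 0)).2 (Real.exp_nonneg _)

theorem stmt11 {n : ℕ}
    (F : (Fin n → ℝ) → (Fin n → ℝ)) (hF : ContDiff ℝ 1 F)
    (M : (Fin n → ℝ) → Matrix (Fin n) (Fin n) ℝ) (hM : ContDiff ℝ 1 M)
    (hMsymm : ∀ x, (M x).IsSymm)
    (p₁ p₂ : ℝ) (hp₁ : 0 < p₁) (hp₁₂ : p₁ ≤ p₂)
    (hbound : ∀ (x v : Fin n → ℝ), p₁ * (v ⬝ᵥ v) ≤ v ⬝ᵥ (M x *ᵥ v) ∧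
        v ⬝ᵥ (M x *ᵥ v) ≤ p₂ * (v ⬝ᵥ v))
    (lam₀ : ℝ) (hlam₀ : 0 < lam₀)
    (hcontr : ∀ (x v : Fin n → ℝ),
      v ⬝ᵥ ((fderiv ℝ M x (F x) + (jacM F x)ᵀ * M x + M x * jacM F x) *ᵥ v)
        ≤ -lam₀ * (v ⬝ᵥ (M x *ᵥ v)))
    (x δ : ℝ → (Fin n → ℝ))
    (hx : ∀ t, 0 ≤ t → HasDerivAt x (F (x t)) t)
    (hδ : ∀ t, 0 ≤ t → HasDerivAt δ (jacM F (x t) *ᵥ δ t) t) :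
    ∀ t, 0 ≤ t →
      δ t ⬝ᵥ (M (x t) *ᵥ δ t) ≤ Real.exp (-lam₀ * t) * (δ 0 ⬝ᵥ (M (x 0) *ᵥ δ 0)) ∧
      Real.sqrt (δ t ⬝ᵥ δ t)
        ≤ Real.sqrt (p₂ / p₁) * Real.exp (-(lam₀ * t) / 2) * Real.sqrt (δ 0 ⬝ᵥ δ 0) :=
  stmt11_general F M hM p₁ p₂ hp₁ hbound lam₀ hcontr x δ hx hδ
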